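/- arXiv:2507.18909 — 5 statements merged into one kernel-verified Lean document; each statement's English description precedes it below -/
import Mathlib

section
/- Let A12 ∈ ℝ^{n1×n2} and let r2 = rank(A12). Then for every positive integer k, the rank of M_k(A12) equals n1^k − (n1 − r2)^k. -/
open Matrix

noncomputable section

/-- Position-dependent Kronecker product of square matrices: the entry at
row `r` and column `c` is `∏ j, F j (r j) (c j)`. -/
def posKron {n k : ℕ} (F : Fin k → Matrix (Fin n) (Fin n) ℝ) :
    Matrix (Fin k → Fin n) (Fin k → Fin n) ℝ :=
  Matrix.of fun r c => ∏ j, F j (r j) (c j)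

/-- The `k`-fold Kronecker power `X^{⊗k}`. -/
def kronPow {n : ℕ} (k : ℕ) (X : Matrix (Fin n) (Fin n) ℝ) :
    Matrix (Fin k → Fin n) (Fin k → Fin n) ℝ :=
  posKron fun _ => X

/-- Number of columns of the `j`-th Kronecker factor in the `i`-th block of `M_k^B(A)`. -/
def mCol (q p n : ℕ) {k : ℕ} (i j : Fin k) : ℕ :=
  if j < i then q else if j = i then p else n

/-- The `i`-th block `B^{⊗(i-1)} ⊗ A ⊗ I_n^{⊗(k-i)}` of `M_k^B(A)`. -/
def mBlock {n p q k : ℕ} (B : Matrix (Fin n) (Fin q) ℝ) (A : Matrix (Fin n) (Fin p) ℝ)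
    (i : Fin k) : Matrix (Fin k → Fin n) (∀ j : Fin k, Fin (mCol q p n i j)) ℝ :=
  Matrix.of fun r c => ∏ j : Fin k,
    if h1 : j < i then B (r j) (Fin.cast (by simp [mCol, h1]) (c j))
    else if h2 : j = i then A (r j) (Fin.cast (by simp [mCol, h1, h2]) (c j))
    else (1 : Matrix (Fin n) (Fin n) ℝ) (r j) (Fin.cast (by simp [mCol, h1, h2]) (c j))

/-- The horizontal block concatenation `M_k^B(A)`, with blocks indexed by `i : Fin k`. -/
def mFull {n p q : ℕ} (k : ℕ) (B : Matrix (Fin n) (Fin q) ℝ) (A : Matrix (Fin n) (Fin p) ℝ) :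
    Matrix (Fin k → Fin n) (Σ i : Fin k, ∀ j : Fin k, Fin (mCol q p n i j)) ℝ :=
  Matrix.of fun r c => mBlock B A c.1 r c.2

/-!
The column space of the `i`-th block `I ⊗ ⋯ ⊗ A ⊗ ⋯ ⊗ I` is `V ⊗ ⋯ ⊗ C ⊗ ⋯ ⊗ V`, where
`V = ℝⁿ` and `C` is the column space of `A`: the vectors all of whose lines in direction `i` lie
in `C`. If `rank A = r`, an invertible `P` maps `C` onto the span of `r` standard basis vectors,
and `P^{⊗k}` carries each `V ⊗ ⋯ ⊗ C ⊗ ⋯ ⊗ V` to the corresponding coordinate subspace. The sum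
of those is spanned by the `e_{x₁} ⊗ ⋯ ⊗ e_{xₖ}` with some `xⱼ` among the `r` chosen indices,
and there are `n^k - (n - r)^k` of them.
-/

namespace BlockKronecker

open Module Submodule

section Slices

variable {K : Type*} [Semiring K] {κ ι : Type*} [DecidableEq κ]

lemma funSplitAt_symm_mk_restrict (i : κ) (r : κ → ι) :
    (Equiv.funSplitAt i ι).symm (r i, fun j : {j // j ≠ i} => r j) = r :=
  (Equiv.funSplitAt i ι).symm_apply_apply r

def sliceAt (i : κ) (h : {j // j ≠ i} → ι) : ((κ → ι) → K) →ₗ[K] ι → K :=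
  LinearMap.funLeft K K fun x => (Equiv.funSplitAt i ι).symm (x, h)

@[simp]
lemma sliceAt_apply (i : κ) (h : {j // j ≠ i} → ι) (v : (κ → ι) → K) (x : ι) :
    sliceAt i h v x = v ((Equiv.funSplitAt i ι).symm (x, h)) := rfl

/-- For `κ = Fin k` this is `V ⊗ ⋯ ⊗ C ⊗ ⋯ ⊗ V` with `C` in the `i`-th factor. -/
def sliceSubmodule (C : Submodule K (ι → K)) (i : κ) : Submodule K ((κ → ι) → K) :=
  ⨅ h, C.comap (sliceAt i h)

lemma mem_sliceSubmodule {C : Submodule K (ι → K)} {i : κ} {v : (κ → ι) → K} :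
    v ∈ sliceSubmodule C i ↔ ∀ h, sliceAt i h v ∈ C := by
  simp [sliceSubmodule]

variable [Fintype κ] [DecidableEq ι]

def insertAt (i : κ) (h : {j // j ≠ i} → ι) : (ι → K) →ₗ[K] (κ → ι) → K where
  toFun s r := if (fun j : {j // j ≠ i} => r j) = h then s (r i) else 0
  map_add' s t := by ext r; by_cases hr : (fun j : {j // j ≠ i} => r j) = h <;> simp [hr]
  map_smul' c s := by ext r; by_cases hr : (fun j : {j // j ≠ i} => r j) = h <;> simp [hr]

lemma sliceAt_insertAt (i : κ) (h h' : {j // j ≠ i} → ι) (s : ι → K) :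
    sliceAt i h' (insertAt i h s) = if h' = h then s else 0 := by
  ext x
  split_ifs <;> simp [insertAt, *, fun j : {j // j ≠ i} => j.2]

lemma sum_insertAt_sliceAt [Fintype ι] (i : κ) (v : (κ → ι) → K) :
    ∑ h, insertAt i h (sliceAt i h v) = v := by
  ext r
  simp [insertAt, funSplitAt_symm_mk_restrict]

lemma iSup_map_insertAt [Fintype ι] (C : Submodule K (ι → K)) (i : κ) :
    ⨆ h, C.map (insertAt i h) = sliceSubmodule C i := by
  refine le_antisymm (iSup_le fun h => map_le_iff_le_comap.2 fun s hs => ?_) fun v hv => ?_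
  · refine mem_sliceSubmodule.2 fun h' => ?_
    rw [sliceAt_insertAt]
    split_ifs
    exacts [hs, C.zero_mem]
  · rw [← sum_insertAt_sliceAt i v]
    exact sum_mem fun h _ =>
      mem_iSup_of_mem h (mem_map_of_mem (mem_sliceSubmodule.1 hv h))

end Slices

section Coordinates

variable {K : Type*} [Semiring K] {ι : Type*}

variable (K) in
def coordSubmodule (s : Set ι) : Submodule K (ι → K) :=
  ⨅ x ∈ sᶜ, LinearMap.ker (LinearMap.proj x)

lemma mem_coordSubmodule {s : Set ι} {v : ι → K} :
    v ∈ coordSubmodule K s ↔ ∀ x ∉ s, v x = 0 := by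
  simp [coordSubmodule]

lemma finrank_coordSubmodule [StrongRankCondition K] [Fintype ι] (s : Set ι) :
    finrank K (coordSubmodule K s) = s.ncard := by
  classical
  rw [coordSubmodule, (LinearMap.iInfKerProjEquiv K (fun _ => K) (I := s) disjoint_compl_right
    (by simp)).finrank_eq, finrank_fintype_fun_eq_card, ← Nat.card_eq_fintype_card,
    Nat.card_coe_set_eq]

lemma iSup_coordSubmodule [Finite ι] {α : Sort*} (s : α → Set ι) :
    ⨆ a, coordSubmodule K (s a) = coordSubmodule K (⋃ a, s a) := by
  classical
  have hspan (t : Set ι) :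
      coordSubmodule K t = ⨆ x ∈ t, LinearMap.range (LinearMap.single K (fun _ => K) x) :=
    (LinearMap.iSup_range_single_eq_iInf_ker_proj K _ isCompl_compl t.toFinite).symm
  simp only [hspan, iSup_iUnion]

lemma sliceSubmodule_coordSubmodule {κ : Type*} [DecidableEq κ] (s : Set ι) (i : κ) :
    sliceSubmodule (coordSubmodule K s) i = coordSubmodule K {r | r i ∈ s} := by
  ext v
  simp only [mem_sliceSubmodule, mem_coordSubmodule, sliceAt_apply, Set.mem_ofPred_eq]
  refine ⟨fun hv r hr => ?_, fun hv h x hx => hv _ (by simpa using hx)⟩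
  simpa [funSplitAt_symm_mk_restrict] using hv (fun j => r j) (r i) hr

end Coordinates

lemma ncard_iUnion_setOf_apply_mem {κ ι : Type*} [Fintype κ] [Fintype ι] (s : Set ι) :
    (⋃ j : κ, {r : κ → ι | r j ∈ s}).ncard
      = Nat.card ι ^ Nat.card κ - (Nat.card ι - s.ncard) ^ Nat.card κ := by
  have hcompl : (⋃ j : κ, {r : κ → ι | r j ∈ s}) = (Set.univ.pi fun _ => sᶜ)ᶜ := by
    ext r; simp
  rw [hcompl, Set.ncard_compl, ← Nat.card_coe_set_eq, Nat.card_congr (Equiv.Set.univPi _),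
    Nat.card_fun, Nat.card_fun, Nat.card_coe_set_eq, Set.ncard_compl]

lemma exists_linearEquiv_map_eq {K V : Type*} [DivisionRing K] [AddCommGroup V] [Module K V]
    [FiniteDimensional K V] {C D : Submodule K V} (h : finrank K C = finrank K D) :
    ∃ e : V ≃ₗ[K] V, C.map (e : V →ₗ[K] V) = D := by
  obtain ⟨C', hC⟩ := Submodule.exists_isCompl C
  obtain ⟨D', hD⟩ := Submodule.exists_isCompl D
  have h' : finrank K C' = finrank K D' := by
    have := finrank_add_eq_of_isCompl hC
    have := finrank_add_eq_of_isCompl hD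
    omega
  let e : V ≃ₗ[K] V := (prodEquivOfIsCompl C C' hC).symm ≪≫ₗ
    (LinearEquiv.ofFinrankEq _ _ h).prodCongr (LinearEquiv.ofFinrankEq _ _ h') ≪≫ₗ
    prodEquivOfIsCompl D D' hD
  refine ⟨e, eq_of_le_of_finrank_eq ?_ (by rw [LinearEquiv.finrank_map_eq, h])⟩
  rintro _ ⟨x, hx, rfl⟩
  simp [e, projectionOnto_apply_of_mem_right hC.symm hx]

lemma map_mulVecLin_map_mulVecLin_of_mul_eq_one {R m : Type*} [CommSemiring R] [Fintype m]
    [DecidableEq m] {M N : Matrix m m R} (hMN : M * N = 1) (p : Submodule R (m → R)) :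
    (p.map N.mulVecLin).map M.mulVecLin = p := by
  rw [← map_comp, ← mulVecLin_mul, hMN, mulVecLin_one, Submodule.map_id]

section KroneckerPower

variable {n k : ℕ}

lemma posKron_mul (F G : Fin k → Matrix (Fin n) (Fin n) ℝ) :
    posKron F * posKron G = posKron fun j => F j * G j := by
  ext r s
  simp only [posKron, mul_apply, of_apply, ← Finset.prod_mul_distrib]
  exact (Fintype.prod_sum fun j x => F j (r j) x * G j x (s j)).symm

lemma posKron_one : posKron (fun _ : Fin k => (1 : Matrix (Fin n) (Fin n) ℝ)) = 1 := by
  ext r s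
  simp [posKron, one_apply, Fintype.prod_boole, funext_iff]

lemma kronPow_mul (M N : Matrix (Fin n) (Fin n) ℝ) :
    kronPow k M * kronPow k N = kronPow k (M * N) :=
  posKron_mul _ _

lemma kronPow_one : kronPow k (1 : Matrix (Fin n) (Fin n) ℝ) = 1 :=
  posKron_one

lemma sliceAt_kronPow_mulVec (M : Matrix (Fin n) (Fin n) ℝ) (v : (Fin k → Fin n) → ℝ)
    (i : Fin k) (h : {j // j ≠ i} → Fin n) :
    sliceAt i h (kronPow k M *ᵥ v) = M *ᵥ ∑ h', (∏ j, M (h j) (h' j)) • sliceAt i h' v := by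
  ext x
  simp only [sliceAt_apply, mulVec, dotProduct, kronPow, posKron, of_apply]
  rw [← (Equiv.funSplitAt i (Fin n)).symm.sum_comp, Fintype.sum_prod_type]
  simp [Fintype.prod_eq_mul_prod_subtype_ne _ i, Finset.mul_sum, mul_assoc,
    fun j : {j // j ≠ i} => j.2]

lemma map_kronPow_sliceSubmodule_le (M : Matrix (Fin n) (Fin n) ℝ)
    (C : Submodule ℝ (Fin n → ℝ)) (i : Fin k) :
    (sliceSubmodule C i).map (kronPow k M).mulVecLin
      ≤ sliceSubmodule (C.map M.mulVecLin) i := by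
  rintro _ ⟨v, hv, rfl⟩
  refine mem_sliceSubmodule.2 fun h => ?_
  rw [mulVecLin_apply, sliceAt_kronPow_mulVec]
  exact mem_map_of_mem (sum_mem fun h' _ => C.smul_mem _ (mem_sliceSubmodule.1 hv h'))

lemma map_kronPow_sliceSubmodule {M N : Matrix (Fin n) (Fin n) ℝ} (hMN : M * N = 1)
    (hNM : N * M = 1) (C : Submodule ℝ (Fin n → ℝ)) (i : Fin k) :
    (sliceSubmodule C i).map (kronPow k M).mulVecLin
      = sliceSubmodule (C.map M.mulVecLin) i := by
  refine le_antisymm (map_kronPow_sliceSubmodule_le M C i) ?_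
  have hN := map_kronPow_sliceSubmodule_le N (C.map M.mulVecLin) i
  rw [map_mulVecLin_map_mulVecLin_of_mul_eq_one hNM] at hN
  calc sliceSubmodule (C.map M.mulVecLin) i
      = ((sliceSubmodule (C.map M.mulVecLin) i).map (kronPow k N).mulVecLin).map
          (kronPow k M).mulVecLin := by
        rw [map_mulVecLin_map_mulVecLin_of_mul_eq_one (by rw [kronPow_mul, hMN, kronPow_one])]
    _ ≤ (sliceSubmodule C i).map (kronPow k M).mulVecLin := map_mono hN

lemma finrank_iSup_sliceSubmodule_congr {C D : Submodule ℝ (Fin n → ℝ)}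
    (h : finrank ℝ C = finrank ℝ D) :
    finrank ℝ ↥(⨆ i : Fin k, sliceSubmodule C i)
      = finrank ℝ ↥(⨆ i : Fin k, sliceSubmodule D i) := by
  obtain ⟨e, he⟩ := exists_linearEquiv_map_eq h
  set M := LinearMap.toMatrix' (e : (Fin n → ℝ) →ₗ[ℝ] Fin n → ℝ)
  set N := LinearMap.toMatrix' (e.symm : (Fin n → ℝ) →ₗ[ℝ] Fin n → ℝ)
  have hMN : M * N = 1 := by simp [M, N, ← LinearMap.toMatrix'_comp]
  have hNM : N * M = 1 := by simp [M, N, ← LinearMap.toMatrix'_comp]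
  have hM : M.mulVecLin = e := Matrix.toLin'_toMatrix' _
  have hinj : Function.Injective (kronPow k M).mulVecLin := fun v w hvw => by
    simpa [mulVec_mulVec, kronPow_mul, hNM, kronPow_one] using congrArg (kronPow k N *ᵥ ·) hvw
  rw [(equivMapOfInjective _ hinj (⨆ i : Fin k, sliceSubmodule C i)).finrank_eq,
    Submodule.map_iSup, iSup_congr fun i => map_kronPow_sliceSubmodule hMN hNM C i, hM, he]

end KroneckerPower

section Blocks

variable {n p k : ℕ}

lemma mCol_self (q : ℕ) (i : Fin k) : mCol q p n i i = p := by
  simp [mCol]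

lemma mCol_of_ne {i j : Fin k} (h : j ≠ i) : mCol n p n i j = n := by
  simp [mCol, h]

lemma col_mBlock_one (A : Matrix (Fin n) (Fin p) ℝ) (i : Fin k)
    (c : ∀ j, Fin (mCol n p n i j)) :
    (mBlock (1 : Matrix (Fin n) (Fin n) ℝ) A i).col c
      = insertAt i (fun j => Fin.cast (mCol_of_ne j.2) (c j))
          (A.col (Fin.cast (mCol_self n i) (c i))) := by
  ext r
  simp only [col_apply, mBlock, of_apply, insertAt, LinearMap.coe_mk, AddHom.coe_mk]
  rw [Fintype.prod_eq_mul_prod_subtype_ne _ i]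
  simp [fun j : {j // j ≠ i} => j.2, one_apply, funext_iff, Fin.ext_iff, Fintype.prod_boole]

lemma range_col_mBlock_one (A : Matrix (Fin n) (Fin p) ℝ) (i : Fin k) :
    Set.range (mBlock (1 : Matrix (Fin n) (Fin n) ℝ) A i).col
      = ⋃ h, insertAt i h '' Set.range A.col := by
  refine subset_antisymm ?_ (Set.iUnion_subset fun h => ?_)
  · rintro _ ⟨c, rfl⟩
    exact Set.mem_iUnion.2 ⟨_, _, Set.mem_range_self _, (col_mBlock_one A i c).symm⟩
  · rintro _ ⟨_, ⟨m, rfl⟩, rfl⟩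
    refine ⟨fun j => if hj : j = i then Fin.cast (by rw [hj, mCol_self]) m
      else Fin.cast (mCol_of_ne hj).symm (h ⟨j, hj⟩), ?_⟩
    rw [col_mBlock_one]
    congr 2
    · ext j
      simp [j.2]
    · simp

lemma range_mBlock_one (A : Matrix (Fin n) (Fin p) ℝ) (i : Fin k) :
    LinearMap.range (mBlock (1 : Matrix (Fin n) (Fin n) ℝ) A i).mulVecLin
      = sliceSubmodule (LinearMap.range A.mulVecLin) i := by
  rw [range_mulVecLin, range_mulVecLin, ← iSup_map_insertAt, range_col_mBlock_one, span_iUnion]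
  simp_rw [map_span]

lemma range_mFull_one (A : Matrix (Fin n) (Fin p) ℝ) :
    LinearMap.range (mFull k (1 : Matrix (Fin n) (Fin n) ℝ) A).mulVecLin
      = ⨆ i, sliceSubmodule (LinearMap.range A.mulVecLin) i := by
  have hcol : (mFull k (1 : Matrix (Fin n) (Fin n) ℝ) A).col
      = fun c => (mBlock (1 : Matrix (Fin n) (Fin n) ℝ) A c.1).col c.2 := rfl
  rw [range_mulVecLin, hcol, Set.range_sigma_eq_iUnion_range, span_iUnion]
  simp_rw [← range_mulVecLin, range_mBlock_one]

end Blocks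

end BlockKronecker

open BlockKronecker

theorem stmt1_general {n1 n2 : ℕ} (A12 : Matrix (Fin n1) (Fin n2) ℝ) (k : ℕ) :
    (mFull k (1 : Matrix (Fin n1) (Fin n1) ℝ) A12).rank
      = n1 ^ k - (n1 - A12.rank) ^ k := by
  obtain ⟨t, -, ht⟩ := Finset.exists_subset_card_eq (s := Finset.univ)
    (A12.rank_le_card_height.trans_eq Finset.card_univ.symm)
  have hC : Module.finrank ℝ (LinearMap.range A12.mulVecLin)
      = Module.finrank ℝ (coordSubmodule ℝ (t : Set (Fin n1))) := by
    rw [finrank_coordSubmodule, Set.ncard_coe_finset, ht, Matrix.rank]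
  rw [Matrix.rank, range_mFull_one, finrank_iSup_sliceSubmodule_congr hC]
  rw [iSup_congr fun i => sliceSubmodule_coordSubmodule _ i, iSup_coordSubmodule,
    finrank_coordSubmodule, ncard_iUnion_setOf_apply_mem, Set.ncard_coe_finset, ht,
    Nat.card_fin, Nat.card_fin]

/-- Let `A12 ∈ ℝ^{n1×n2}` and `r2 = rank A12`.  For every positive integer `k`,
`rank (M_k(A12)) = n1^k - (n1 - r2)^k`, where `M_k(A12) = M_k^{I}(A12)` is the
block concatenation whose `i`-th block is `I^{⊗(i-1)} ⊗ A12 ⊗ I^{⊗(k-i)}`. -/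
theorem stmt1 {n1 n2 : ℕ} (A12 : Matrix (Fin n1) (Fin n2) ℝ) (k : ℕ) (hk : 0 < k) :
    (mFull k (1 : Matrix (Fin n1) (Fin n1) ℝ) A12).rank
      = n1 ^ k - (n1 - A12.rank) ^ k :=
  stmt1_general A12 k
end
end

section
/- Let A12 ∈ ℝ^{n1×n2} have full column rank with n2 < n1, let R = I_{n1} − A12(A12ᵀA12)⁻¹A12ᵀ, and let Ĩ ∈ ℝ^{n1×(n1−n2)} be any matrix such that RĨ has full column rank n1 − n2. Then for every positive integer k, the matrix M_k^{Ĩ}(A12) has full column rank; in particular its number of columns, n2 · ∑_{i=1}^{k} n1^{k−i}(n1−n2)^{i−1}, equals its rank n1^k − (n1−n2)^k. -/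
/-! The matrix `S = [A12 | Ĩ]` is invertible: `R A12 = 0`, so `S x = 0` forces `R Ĩ x₂ = 0`,
hence `x₂ = 0` and then `x₁ = 0`. The row blocks `A'ᵀ, B'ᵀ` of a left inverse of `S` are
biorthogonal to `A12, Ĩ`. Each block of `M_k^B(A)` is a Kronecker product, and Kronecker
products multiply factorwise, so block `(i, i')` of `M_k^{B'}(A')ᵀ M_k^{Ĩ}(A12)` is the Kronecker
product of the factor products: all identities when `i = i'`, and containing the vanishing
cross term `A'ᵀĨ` or `B'ᵀA12` at position `min i i'` otherwise. Thus `M_k^{Ĩ}(A12)` has a left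
inverse. Its column count `n2 ∑ n1^(k-1-i) (n1-n2)^i` is the geometric sum for
`n1^k - (n1-n2)^k`. -/

open Matrix

noncomputable section

namespace Matrix

section Rank

variable {K : Type*} [Field K] {m n : Type*} [Fintype n]

theorem mulVec_injective_iff_rank_eq_card {A : Matrix m n K} :
    Function.Injective A.mulVec ↔ A.rank = Fintype.card n := by
  rw [mulVec_injective_iff, linearIndependent_iff_card_eq_finrank_span,
    rank_eq_finrank_span_cols, Set.finrank, eq_comm]

theorem rank_eq_card_of_mul_eq_one [Fintype m] [DecidableEq n] {A : Matrix m n K}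
    {G : Matrix n m K} (h : G * A = 1) : A.rank = Fintype.card n :=
  le_antisymm A.rank_le_card_width <| by
    simpa [h] using rank_mul_le_right G A

theorem mulVec_fromCols_injective {l n₁ n₂ : Type*} [Fintype m] [Fintype n₁] [Fintype n₂]
    {A : Matrix m n₁ K} {B : Matrix m n₂ K} {P : Matrix l m K}
    (hA : Function.Injective A.mulVec) (hPB : Function.Injective (P * B).mulVec)
    (hPA : P * A = 0) : Function.Injective (fromCols A B).mulVec := by
  rw [← coe_mulVecLin, injective_iff_map_eq_zero]
  intro v hv
  rw [coe_mulVecLin, fromCols_mulVec] at hv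
  have hB : v ∘ Sum.inr = 0 := hPB <| by
    simpa [mulVec_mulVec, mulVec_add, hPA] using congrArg (P *ᵥ ·) hv
  have hA : v ∘ Sum.inl = 0 := hA <| by simpa [hB] using hv
  ext (i | i)
  exacts [congrFun hA i, congrFun hB i]

end Rank

section OrderedField

variable {K : Type*} [Field K] [LinearOrder K] [IsStrictOrderedRing K]
  {m n : Type*} [Fintype m] [Fintype n] [DecidableEq n]

theorem isUnit_transpose_mul_self_of_mulVec_injective {A : Matrix m n K}
    (hA : Function.Injective A.mulVec) : IsUnit (Aᵀ * A) := by
  rw [← mulVec_injective_iff_isUnit, ← coe_mulVecLin, ← LinearMap.ker_eq_bot,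
    ker_mulVecLin_transpose_mul_self, LinearMap.ker_eq_bot, coe_mulVecLin]
  exact hA

theorem transpose_mul_self_inv_mul_transpose_mul_self {A : Matrix m n K}
    (hA : Function.Injective A.mulVec) : (Aᵀ * A)⁻¹ * Aᵀ * A = 1 := by
  rw [Matrix.mul_assoc, nonsing_inv_mul _ ((isUnit_iff_isUnit_det _).mp
    (isUnit_transpose_mul_self_of_mulVec_injective hA))]

theorem one_sub_projection_mul_self [DecidableEq m] {A : Matrix m n K}
    (hA : Function.Injective A.mulVec) : (1 - A * (Aᵀ * A)⁻¹ * Aᵀ) * A = 0 := by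
  rw [Matrix.sub_mul, Matrix.one_mul, Matrix.mul_assoc, Matrix.mul_assoc A,
    ← Matrix.mul_assoc _ Aᵀ, transpose_mul_self_inv_mul_transpose_mul_self hA, Matrix.mul_one,
    sub_self]

theorem exists_biorthogonal_of_mulVec_fromCols_injective {n₁ n₂ : Type*} [Fintype n₁]
    [Fintype n₂] [DecidableEq n₁] [DecidableEq n₂] {A : Matrix m n₁ K} {B : Matrix m n₂ K}
    (h : Function.Injective (fromCols A B).mulVec) :
    ∃ (A' : Matrix m n₁ K) (B' : Matrix m n₂ K),
      A'ᵀ * A = 1 ∧ A'ᵀ * B = 0 ∧ B'ᵀ * A = 0 ∧ B'ᵀ * B = 1 := by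
  set T := ((fromCols A B)ᵀ * fromCols A B)⁻¹ * (fromCols A B)ᵀ
  have hT : T * fromCols A B = 1 := transpose_mul_self_inv_mul_transpose_mul_self h
  rw [← fromRows_toRows T, fromRows_mul_fromCols, ← fromBlocks_one, fromBlocks_inj] at hT
  exact ⟨T.toRows₁ᵀ, T.toRows₂ᵀ, by simpa using hT⟩

end OrderedField

section PiKron

variable {ι : Type*} [Fintype ι] {α : Type*} {l m n : ι → Type*}

def piKron [CommMonoid α] (F : ∀ i, Matrix (m i) (n i) α) : Matrix (∀ i, m i) (∀ i, n i) α :=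
  of fun r c => ∏ i, F i (r i) (c i)

theorem transpose_piKron [CommMonoid α] (F : ∀ i, Matrix (m i) (n i) α) :
    (piKron F)ᵀ = piKron fun i => (F i)ᵀ :=
  rfl

theorem piKron_mul_piKron [CommSemiring α] [DecidableEq ι] [∀ i, Fintype (m i)]
    (F : ∀ i, Matrix (l i) (m i) α) (G : ∀ i, Matrix (m i) (n i) α) :
    piKron F * piKron G = piKron fun i => F i * G i := by
  ext r c
  simp only [piKron, mul_apply, of_apply, Fintype.prod_sum, Finset.prod_mul_distrib]

theorem piKron_one [CommMonoidWithZero α] [DecidableEq ι] [∀ i, DecidableEq (m i)] :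
    piKron (fun i => (1 : Matrix (m i) (m i) α)) = 1 := by
  ext r c
  by_cases h : r = c
  · subst h
    simp [piKron]
  · obtain ⟨i, hi⟩ := Function.ne_iff.mp h
    rw [one_apply_ne h]
    exact Finset.prod_eq_zero (Finset.mem_univ i) (one_apply_ne hi)

theorem piKron_eq_zero [CommMonoidWithZero α] {F : ∀ i, Matrix (m i) (n i) α} (i : ι)
    (hi : F i = 0) : piKron F = 0 := by
  ext r c
  exact Finset.prod_eq_zero (Finset.mem_univ i) (by simp [hi])

end PiKron

theorem transpose_submatrix_id_mul_submatrix_id {α : Type*} [CommSemiring α]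
    {l l' m n o : Type*} [Fintype m] (X : Matrix m n α) (Y : Matrix m o α) (f : l → n)
    (g : l' → o) : (X.submatrix id f)ᵀ * Y.submatrix id g = (Xᵀ * Y).submatrix f g := by
  rw [transpose_submatrix, submatrix_mul _ _ _ _ _ Function.bijective_id]

end Matrix

section Blocks

variable {n p q k : ℕ}

theorem mCol_of_lt {i j : Fin k} (h : j < i) : mCol q p n i j = q := by
  simp [mCol, h]

theorem mCol_self (i : Fin k) : mCol q p n i i = p := by
  simp [mCol]

theorem mCol_of_gt {i j : Fin k} (h : i < j) : mCol q p n i j = n := by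
  simp [mCol, h.not_gt, h.ne']

def mFactor (B : Matrix (Fin n) (Fin q) ℝ) (A : Matrix (Fin n) (Fin p) ℝ) (i j : Fin k) :
    Matrix (Fin n) (Fin (mCol q p n i j)) ℝ :=
  of fun r c =>
    if h1 : j < i then B r (Fin.cast (by simp [mCol, h1]) c)
    else if h2 : j = i then A r (Fin.cast (by simp [mCol, h2]) c)
    else (1 : Matrix (Fin n) (Fin n) ℝ) r (Fin.cast (by simp [mCol, h1, h2]) c)

variable {A A' : Matrix (Fin n) (Fin p) ℝ} {B B' : Matrix (Fin n) (Fin q) ℝ}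

theorem mBlock_eq_piKron (i : Fin k) : mBlock B A i = piKron (mFactor B A i) :=
  rfl

theorem mFactor_of_lt {i j : Fin k} (h : j < i) :
    mFactor B A i j = B.submatrix id (Fin.cast (mCol_of_lt h)) := by
  ext r c
  simp [mFactor, h]

theorem mFactor_self (i : Fin k) :
    mFactor B A i i = A.submatrix id (Fin.cast (mCol_self i)) := by
  ext r c
  simp [mFactor]

theorem mFactor_of_gt {i j : Fin k} (h : i < j) :
    mFactor B A i j = (1 : Matrix (Fin n) (Fin n) ℝ).submatrix id (Fin.cast (mCol_of_gt h)) := by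
  ext r c
  simp [mFactor, h.not_gt, h.ne', one_apply]

theorem mFactor_transpose_mul_mFactor (hAA : A'ᵀ * A = 1) (hBB : B'ᵀ * B = 1) (i j : Fin k) :
    (mFactor B' A' i j)ᵀ * mFactor B A i j = 1 := by
  rcases lt_trichotomy j i with h | rfl | h
  · rw [mFactor_of_lt h, mFactor_of_lt h, transpose_submatrix_id_mul_submatrix_id, hBB,
      submatrix_one _ (Fin.cast_injective _)]
  · rw [mFactor_self, mFactor_self, transpose_submatrix_id_mul_submatrix_id, hAA,
      submatrix_one _ (Fin.cast_injective _)]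
  · rw [mFactor_of_gt h, mFactor_of_gt h, transpose_submatrix_id_mul_submatrix_id,
      transpose_one, Matrix.one_mul, submatrix_one _ (Fin.cast_injective _)]

theorem mBlock_transpose_mul_mBlock (hAA : A'ᵀ * A = 1) (hBB : B'ᵀ * B = 1) (i : Fin k) :
    (mBlock B' A' i)ᵀ * mBlock B A i = 1 := by
  rw [mBlock_eq_piKron, mBlock_eq_piKron, transpose_piKron, piKron_mul_piKron]
  simp_rw [mFactor_transpose_mul_mFactor hAA hBB]
  exact piKron_one

theorem mBlock_transpose_mul_mBlock_of_ne (hAB : A'ᵀ * B = 0) (hBA : B'ᵀ * A = 0)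
    {i i' : Fin k} (h : i ≠ i') : (mBlock B' A' i)ᵀ * mBlock B A i' = 0 := by
  rw [mBlock_eq_piKron, mBlock_eq_piKron, transpose_piKron, piKron_mul_piKron]
  rcases h.lt_or_gt with h | h
  · refine piKron_eq_zero i ?_
    rw [mFactor_self, mFactor_of_lt h, transpose_submatrix_id_mul_submatrix_id, hAB]
    rfl
  · refine piKron_eq_zero i' ?_
    rw [mFactor_self, mFactor_of_lt h, transpose_submatrix_id_mul_submatrix_id, hBA]
    rfl

theorem mFull_transpose_mul_mFull (hAA : A'ᵀ * A = 1) (hAB : A'ᵀ * B = 0)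
    (hBA : B'ᵀ * A = 0) (hBB : B'ᵀ * B = 1) : (mFull k B' A')ᵀ * mFull k B A = 1 := by
  ext ⟨i, c⟩ ⟨i', c'⟩
  change ((mBlock B' A' i)ᵀ * mBlock B A i') c c' = _
  by_cases h : i = i'
  · subst h
    rw [mBlock_transpose_mul_mBlock hAA hBB]
    simp [one_apply]
  · rw [mBlock_transpose_mul_mBlock_of_ne hAB hBA h, one_apply_ne (by simp [h]), Matrix.zero_apply]

theorem prod_mCol (i : Fin k) : ∏ j, mCol q p n i j = q ^ (i : ℕ) * p * n ^ (k - 1 - i) := by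
  have h_eq : ∀ a : Fin k, i ≤ a ∧ a = i ↔ a = i := fun a => ⟨And.right, fun h => ⟨h.ge, h⟩⟩
  have h_gt : ∀ a : Fin k, i ≤ a ∧ ¬a = i ↔ i < a := fun a => by rw [lt_iff_le_and_ne, ne_comm]
  simp [mCol, Finset.prod_ite, Finset.filter_filter, Finset.filter_gt_eq_Iio, h_eq,
    Finset.filter_eq', h_gt, Finset.filter_lt_eq_Ioi, mul_assoc]

theorem card_mFull_cols :
    Fintype.card (Σ i : Fin k, ∀ j : Fin k, Fin (mCol q p n i j))
      = p * ∑ i ∈ Finset.range k, n ^ (k - 1 - i) * q ^ i := by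
  simp only [Fintype.card_sigma, Fintype.card_pi, Fintype.card_fin, prod_mCol, Finset.mul_sum]
  rw [Fin.sum_univ_eq_sum_range (fun i => q ^ i * p * n ^ (k - 1 - i))]
  exact Finset.sum_congr rfl fun i _ => by ring

end Blocks

theorem mul_sum_pow_mul_pow_add_pow (p q k : ℕ) :
    p * ∑ i ∈ Finset.range k, (p + q) ^ (k - 1 - i) * q ^ i + q ^ k = (p + q) ^ k := by
  simp_rw [mul_comm ((p + q) ^ _), ← geom_sum₂_comm, mul_comm p]
  exact geom_sum₂_mul_add p q k

theorem stmt2_general {n1 n2 : ℕ} (A12 : Matrix (Fin n1) (Fin n2) ℝ)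
    (hA : A12.rank = n2)
    (R : Matrix (Fin n1) (Fin n1) ℝ)
    (hR : R = 1 - A12 * (A12ᵀ * A12)⁻¹ * A12ᵀ)
    (Itil : Matrix (Fin n1) (Fin (n1 - n2)) ℝ)
    (hItil : (R * Itil).rank = n1 - n2)
    (k : ℕ) :
    (mFull k Itil A12).rank
        = Fintype.card (Σ i : Fin k, ∀ j : Fin k, Fin (mCol (n1 - n2) n2 n1 i j))
    ∧ Fintype.card (Σ i : Fin k, ∀ j : Fin k, Fin (mCol (n1 - n2) n2 n1 i j))
        = n2 * ∑ i ∈ Finset.range k, n1 ^ (k - 1 - i) * (n1 - n2) ^ i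
    ∧ (mFull k Itil A12).rank = n1 ^ k - (n1 - n2) ^ k := by
  have hA12 : Function.Injective A12.mulVec :=
    mulVec_injective_iff_rank_eq_card.2 (hA.trans (Fintype.card_fin n2).symm)
  have hRA12 : R * A12 = 0 := hR ▸ one_sub_projection_mul_self hA12
  have hS : Function.Injective (fromCols A12 Itil).mulVec :=
    mulVec_fromCols_injective hA12
      (mulVec_injective_iff_rank_eq_card.2 (hItil.trans (Fintype.card_fin _).symm)) hRA12
  obtain ⟨A', B', hAA, hAB, hBA, hBB⟩ := exists_biorthogonal_of_mulVec_fromCols_injective hS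
  have hrank := rank_eq_card_of_mul_eq_one (mFull_transpose_mul_mFull (k := k) hAA hAB hBA hBB)
  have hcard : Fintype.card (Σ i : Fin k, ∀ j : Fin k, Fin (mCol (n1 - n2) n2 n1 i j))
      = n2 * ∑ i ∈ Finset.range k, n1 ^ (k - 1 - i) * (n1 - n2) ^ i := card_mFull_cols
  have hgeom := mul_sum_pow_mul_pow_add_pow n2 (n1 - n2) k
  rw [Nat.add_sub_cancel' (hA ▸ A12.rank_le_height)] at hgeom
  exact ⟨hrank, hcard, by omega⟩

/-- Let `A12 ∈ ℝ^{n1×n2}` have full column rank with `n2 < n1`,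
`R = I - A12 (A12ᵀ A12)⁻¹ A12ᵀ`, and let `Ĩ ∈ ℝ^{n1×(n1-n2)}` be such that `R Ĩ` has
full column rank `n1 - n2`.  Then for every positive integer `k`, `M_k^{Ĩ}(A12)` has
full column rank; in particular its number of columns,
`n2 * ∑_{i=1}^{k} n1^(k-i) (n1-n2)^(i-1)`, equals its rank `n1^k - (n1-n2)^k`. -/
theorem stmt2 {n1 n2 : ℕ} (hn : n2 < n1) (A12 : Matrix (Fin n1) (Fin n2) ℝ)
    (hA : A12.rank = n2)
    (R : Matrix (Fin n1) (Fin n1) ℝ)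
    (hR : R = 1 - A12 * (A12ᵀ * A12)⁻¹ * A12ᵀ)
    (Itil : Matrix (Fin n1) (Fin (n1 - n2)) ℝ)
    (hItil : (R * Itil).rank = n1 - n2)
    (k : ℕ) (hk : 0 < k) :
    (mFull k Itil A12).rank
        = Fintype.card (Σ i : Fin k, ∀ j : Fin k, Fin (mCol (n1 - n2) n2 n1 i j))
    ∧ Fintype.card (Σ i : Fin k, ∀ j : Fin k, Fin (mCol (n1 - n2) n2 n1 i j))
        = n2 * ∑ i ∈ Finset.range k, n1 ^ (k - 1 - i) * (n1 - n2) ^ i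
    ∧ (mFull k Itil A12).rank = n1 ^ k - (n1 - n2) ^ k :=
  stmt2_general A12 hA R hR Itil hItil k
end
end

section
/- Let A12 ∈ ℝ^{n1×n2} have full column rank, let P = A12(A12ᵀA12)⁻¹A12ᵀ and R = I_{n1} − P. Then for every positive integer k, the ordered product ∏_{i=1}^{k} (I_{n1}^{⊗k} − R^{⊗(i−1)} ⊗ P ⊗ I_{n1}^{⊗(k−i)}) equals R^{⊗k}. (The factor I_{n1}^{⊗k} − R^{⊗(i−1)} ⊗ P ⊗ I_{n1}^{⊗(k−i)} is the orthogonal projector onto the orthogonal complement of the column space of Ẑ_i := R^{⊗(i−1)} ⊗ A12 ⊗ I_{n1}^{⊗(k−i)}.) -/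
/-! Full column rank makes `A12ᵀ A12` invertible, so `P` is idempotent and hence so is
`R = 1 - P`. The product of the first `m` factors is then `R^{⊗m} ⊗ I^{⊗(k-m)}`: multiplying it
by the next factor gives `R^{⊗m} ⊗ I^{⊗(k-m)} - R^{⊗m} ⊗ P ⊗ I^{⊗(k-m-1)}` because `R R = R`,
and the Kronecker product is linear in each slot, so this is `R^{⊗(m+1)} ⊗ I^{⊗(k-m-1)}`. -/

open Matrix

noncomputable section

theorem Matrix.isUnit_of_rank_eq_card {m K : Type*} [Fintype m] [DecidableEq m] [Field K]
    {A : Matrix m m K} (h : A.rank = Fintype.card m) : IsUnit A :=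
  linearIndependent_cols_iff_isUnit.mp <|
    linearIndependent_iff_card_eq_finrank_span.mpr (by rw [← h, rank_eq_finrank_span_cols]; rfl)

theorem Matrix.isIdempotentElem_mul_inv_mul {m n R : Type*} [Fintype m] [Fintype n]
    [DecidableEq n] [CommRing R] (A : Matrix m n R) (B : Matrix n m R) (h : IsUnit (B * A)) :
    IsIdempotentElem (A * (B * A)⁻¹ * B) := by
  have hBA : B * A * (B * A)⁻¹ = 1 := mul_nonsing_inv _ ((isUnit_iff_isUnit_det _).mp h)
  calc A * (B * A)⁻¹ * B * (A * (B * A)⁻¹ * B)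
      = A * (B * A)⁻¹ * (B * A * (B * A)⁻¹) * B := by simp only [Matrix.mul_assoc]
    _ = A * (B * A)⁻¹ * B := by rw [hBA, Matrix.mul_one]

theorem Matrix.isUnit_transpose_mul_self {m n K : Type*} [Fintype m] [Fintype n] [DecidableEq n]
    [Field K] [LinearOrder K] [IsStrictOrderedRing K] (A : Matrix m n K)
    (hA : A.rank = Fintype.card n) : IsUnit (Aᵀ * A) :=
  isUnit_of_rank_eq_card (by rw [rank_transpose_mul_self, hA])

section posKron

variable {n k : ℕ}

lemma posKron_mul (F G : Fin k → Matrix (Fin n) (Fin n) ℝ) :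
    posKron F * posKron G = posKron (F * G) := by
  ext r c
  simp only [posKron, mul_apply, of_apply, Pi.mul_apply, Finset.prod_univ_sum,
    Fintype.piFinset_univ, Finset.prod_mul_distrib]

lemma posKron_one : posKron (1 : Fin k → Matrix (Fin n) (Fin n) ℝ) = 1 := by
  ext r c
  simp only [posKron, of_apply, Pi.one_apply, one_apply]
  split_ifs with h
  · simp [h]
  · obtain ⟨j, hj⟩ := Function.ne_iff.mp h
    exact Finset.prod_eq_zero (Finset.mem_univ j) (if_neg hj)

lemma posKron_update_sub (F : Fin k → Matrix (Fin n) (Fin n) ℝ) (i : Fin k)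
    (A B : Matrix (Fin n) (Fin n) ℝ) :
    posKron (Function.update F i (A - B))
      = posKron (Function.update F i A) - posKron (Function.update F i B) := by
  ext r c
  simp only [posKron, of_apply, Matrix.sub_apply, Fintype.prod_eq_mul_prod_compl i,
    Function.update_self]
  have h_compl (X : Matrix (Fin n) (Fin n) ℝ) :
      ∏ j ∈ {i}ᶜ, Function.update F i X j (r j) (c j) = ∏ j ∈ {i}ᶜ, F j (r j) (c j) :=
    Finset.prod_congr rfl fun j hj => by
      rw [Function.update_of_ne (by simpa using hj)]
  rw [h_compl, h_compl, h_compl, sub_mul]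

end posKron

def kronPowPrefix {n : ℕ} (k m : ℕ) (R : Matrix (Fin n) (Fin n) ℝ) :
    Matrix (Fin k → Fin n) (Fin k → Fin n) ℝ :=
  posKron fun l : Fin k => if (l : ℕ) < m then R else 1

section projector

variable {n k : ℕ} {P : Matrix (Fin n) (Fin n) ℝ}

lemma kronPowPrefix_zero (R : Matrix (Fin n) (Fin n) ℝ) : kronPowPrefix k 0 R = 1 := by
  simp only [kronPowPrefix, Nat.not_lt_zero, if_false]
  exact posKron_one

lemma kronPowPrefix_self (R : Matrix (Fin n) (Fin n) ℝ) : kronPowPrefix k k R = kronPow k R := by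
  simp [kronPowPrefix, kronPow]

lemma kronPowPrefix_mul_one_sub (hP : IsIdempotentElem P) (i : Fin k) :
    kronPowPrefix k i (1 - P)
        * (1 - posKron fun l => if l < i then 1 - P else if l = i then P else 1)
      = kronPowPrefix k (i + 1) (1 - P) := by
  set F : Fin k → Matrix (Fin n) (Fin n) ℝ := fun l => if (l : ℕ) < i then 1 - P else 1
  have hFi : Function.update F i 1 = F :=
    Function.update_eq_self_iff.mpr (if_neg (lt_irrefl _)).symm
  have hfactor : (fun l => if l < i then 1 - P else if l = i then P else 1)
      = Function.update F i P := by
    funext l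
    by_cases h : l = i <;> simp [F, h]
  have hsucc : (fun l : Fin k => if (l : ℕ) < i + 1 then 1 - P else 1)
      = Function.update F i (1 - P) := by
    funext l
    by_cases h : l = i
    · simp [F, h]
    · simp [F, h, le_iff_lt_or_eq, Fin.val_inj]
  have hmul : F * Function.update F i P = Function.update F i P := by
    funext l
    by_cases h : l = i
    · simp [F, h]
    · rw [Pi.mul_apply, Function.update_of_ne h]
      by_cases hl : (l : ℕ) < i
      · simp only [F, if_pos hl, hP.one_sub.eq]
      · simp only [F, if_neg hl, mul_one]
  rw [hfactor, kronPowPrefix, kronPowPrefix, hsucc]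
  calc posKron F * (1 - posKron (Function.update F i P))
      = posKron (Function.update F i 1) - posKron (Function.update F i P) := by
        rw [mul_sub, mul_one, posKron_mul, hmul, hFi]
    _ = posKron (Function.update F i (1 - P)) := (posKron_update_sub F i 1 P).symm

theorem prod_take_ofFn_eq_kronPowPrefix (hP : IsIdempotentElem P) {m : ℕ} (hm : m ≤ k) :
    ((List.ofFn fun i : Fin k =>
        1 - posKron fun l => if l < i then 1 - P else if l = i then P else 1).take m).prod
      = kronPowPrefix k m (1 - P) := by
  induction m with
  | zero => simpa using (kronPowPrefix_zero (1 - P)).symm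
  | succ m ih =>
    rw [List.prod_take_succ _ _ (by simpa), ih (by omega), List.getElem_ofFn]
    exact kronPowPrefix_mul_one_sub hP ⟨m, hm⟩

theorem prod_ofFn_eq_kronPow (hP : IsIdempotentElem P) :
    (List.ofFn fun i : Fin k =>
        1 - posKron fun l => if l < i then 1 - P else if l = i then P else 1).prod
      = kronPow k (1 - P) := by
  rw [← kronPowPrefix_self, ← prod_take_ofFn_eq_kronPowPrefix hP le_rfl,
    List.take_of_length_le (by simp)]

end projector

theorem stmt5_general {n1 n2 : ℕ} (A12 : Matrix (Fin n1) (Fin n2) ℝ) (hA : A12.rank = n2)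
    (P R : Matrix (Fin n1) (Fin n1) ℝ)
    (hP : P = A12 * (A12ᵀ * A12)⁻¹ * A12ᵀ) (hR : R = 1 - P)
    (k : ℕ) :
    (List.ofFn fun i : Fin k =>
        (1 : Matrix (Fin k → Fin n1) (Fin k → Fin n1) ℝ)
          - posKron (fun l => if l < i then R else if l = i then P else 1)).prod
      = kronPow k R := by
  subst hR
  have hUnit := isUnit_transpose_mul_self A12 (by rwa [Fintype.card_fin])
  exact prod_ofFn_eq_kronPow (hP ▸ isIdempotentElem_mul_inv_mul A12 A12ᵀ hUnit)

/-- Let `A12 ∈ ℝ^{n1×n2}` have full column rank, `P = A12 (A12ᵀ A12)⁻¹ A12ᵀ`,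
`R = I - P`.  Then the ordered product
`∏_{i=1}^{k} (I^{⊗k} - R^{⊗(i-1)} ⊗ P ⊗ I^{⊗(k-i)})` equals `R^{⊗k}`. -/
theorem stmt5 {n1 n2 : ℕ} (A12 : Matrix (Fin n1) (Fin n2) ℝ) (hA : A12.rank = n2)
    (P R : Matrix (Fin n1) (Fin n1) ℝ)
    (hP : P = A12 * (A12ᵀ * A12)⁻¹ * A12ᵀ) (hR : R = 1 - P)
    (k : ℕ) (hk : 0 < k) :
    (List.ofFn fun i : Fin k =>
        (1 : Matrix (Fin k → Fin n1) (Fin k → Fin n1) ℝ)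
          - posKron (fun l => if l < i then R else if l = i then P else 1)).prod
      = kronPow k R :=
  stmt5_general A12 hA P R hP hR k
end
end

section
/- Let A12 ∈ ℝ^{n1×n2} have full column rank with n2 < n1, let R = I_{n1} − A12(A12ᵀA12)⁻¹A12ᵀ, let k be a positive integer, let L ∈ ℝ^{n1^k × n1^k} be an arbitrary square matrix, and set M = M_k(A12). Then the rank of the block matrix [[L, M], [Mᵀ, 0]] equals 2(n1^k − (n1 − n2)^k) + rank(R^{⊗k} L R^{⊗k}). -/
open Matrix

noncomputable section

/-!
Put `P = R^{⊗k}`, a symmetric idempotent, and `M = M_k(A12)`. From `R A12 = 0` we get `P M = 0`.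
From `1 - R = A12 (A12ᵀ A12)⁻¹ A12ᵀ`, the telescoping sum
`1 - R^{⊗k} = ∑ᵢ R^{⊗(i-1)} ⊗ (1 - R) ⊗ 1^{⊗(k-i)}` factors as `M Gᵀ` with
`G = M_k^R(A12 (A12ᵀ A12)⁻¹)`. Hence `ker Mᵀ = range P`, and
`rank M = n1^k - rank P = n1^k - tr P = n1^k - (n1 - n2)^k`.
Block elimination with `G` replaces `L` by `P L P`. The idempotents `diag(P, 0)` and
`diag(1 - P, 1)` then split the matrix into `diag(P L P, 0)` and `[[0, M], [Mᵀ, 0]]`,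
and their ranks add.
-/

theorem Submodule.finrank_prod {K V W : Type*} [Field K] [AddCommGroup V] [Module K V]
    [AddCommGroup W] [Module K W] (p : Submodule K V) (q : Submodule K W)
    [FiniteDimensional K p] [FiniteDimensional K q] :
    Module.finrank K (p.prod q) = Module.finrank K p + Module.finrank K q := by
  let e : p.prod q ≃ₗ[K] p × q :=
    { toFun := fun x => (⟨x.1.1, x.2.1⟩, ⟨x.1.2, x.2.2⟩)
      invFun := fun x => ⟨(x.1, x.2), x.1.2, x.2.2⟩
      map_add' := fun _ _ => rfl
      map_smul' := fun _ _ => rfl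
      left_inv := fun _ => rfl
      right_inv := fun _ => rfl }
  rw [e.finrank_eq, Module.finrank_prod]

namespace Matrix

section PiKronecker

variable {ι K : Type*} [Fintype ι] {l m n : ι → Type*}

def piKronecker [CommSemiring K] (F : ∀ j, Matrix (m j) (n j) K) :
    Matrix (∀ j, m j) (∀ j, n j) K :=
  of fun r c => ∏ j, F j (r j) (c j)

theorem transpose_piKronecker [CommSemiring K] (F : ∀ j, Matrix (m j) (n j) K) :
    (piKronecker F)ᵀ = piKronecker fun j => (F j)ᵀ :=
  rfl

theorem piKronecker_eq_zero [CommSemiring K] {F : ∀ j, Matrix (m j) (n j) K} (i : ι)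
    (h : F i = 0) : piKronecker F = 0 := by
  ext r c
  exact Finset.prod_eq_zero (Finset.mem_univ i) (by simp [h])

theorem piKronecker_one [CommSemiring K] [∀ j, DecidableEq (n j)] :
    piKronecker (fun j => (1 : Matrix (n j) (n j) K)) = 1 := by
  ext r c
  simp [piKronecker, one_apply, Finset.prod_boole, funext_iff]

variable [DecidableEq ι]

theorem piKronecker_mul [CommSemiring K] [∀ j, Fintype (m j)] (F : ∀ j, Matrix (l j) (m j) K)
    (G : ∀ j, Matrix (m j) (n j) K) :
    piKronecker F * piKronecker G = piKronecker fun j => F j * G j := by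
  ext r c
  simp only [piKronecker, mul_apply, of_apply, ← Finset.prod_mul_distrib]
  exact (Fintype.prod_sum fun j t => F j (r j) t * G j t (c j)).symm

theorem trace_piKronecker [CommSemiring K] [∀ j, Fintype (n j)]
    (F : ∀ j, Matrix (n j) (n j) K) :
    (piKronecker F).trace = ∏ j, (F j).trace :=
  (Fintype.prod_sum fun j t => F j t t).symm

theorem piKronecker_update_sub_piKronecker_update [CommRing K] (F : ∀ j, Matrix (m j) (n j) K)
    (i : ι) (X Y : Matrix (m i) (n i) K) :
    piKronecker (Function.update F i X) - piKronecker (Function.update F i Y)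
      = piKronecker (Function.update F i (X - Y)) := by
  ext r c
  simp only [piKronecker, sub_apply, of_apply, Fintype.prod_eq_mul_prod_compl i,
    Function.update_self]
  have hoff (Z : Matrix (m i) (n i) K) :
      ∏ j ∈ {i}ᶜ, Function.update F i Z j (r j) (c j) = ∏ j ∈ {i}ᶜ, F j (r j) (c j) :=
    Finset.prod_congr rfl fun j hj => by rw [Function.update_of_ne (by simpa using hj)]
  rw [hoff, hoff, hoff, ← sub_mul]

theorem one_sub_piKronecker_const [CommRing K] {α : Type*} [Fintype α] [DecidableEq α] {k : ℕ}
    (X : Matrix α α K) :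
    1 - piKronecker (fun _ : Fin k => X)
      = ∑ i : Fin k, piKronecker fun j => if j < i then X else if j = i then 1 - X else 1 := by
  set T : ℕ → Matrix (Fin k → α) (Fin k → α) K :=
    fun m => piKronecker fun j => if (j : ℕ) < m then X else 1
  have hstep (i : Fin k) :
      (piKronecker fun j => if j < i then X else if j = i then 1 - X else 1) = T i - T (i + 1) := by
    set F : Fin k → Matrix α α K := fun j => if j < i then X else 1
    obtain ⟨h₀, h₁, h₂⟩ :
        (fun j : Fin k => if (j : ℕ) < i then X else 1) = Function.update F i 1 ∧
        (fun j : Fin k => if (j : ℕ) < i + 1 then X else 1) = Function.update F i X ∧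
        (fun j => if j < i then X else if j = i then 1 - X else 1)
          = Function.update F i (1 - X) := by
      refine ⟨funext fun j => ?_, funext fun j => ?_, funext fun j => ?_⟩ <;>
      · simp only [F, Function.update_apply, Fin.ext_iff, Fin.lt_def]
        split_ifs <;> first | rfl | omega
    simp only [T]
    rw [h₀, h₁, h₂, piKronecker_update_sub_piKronecker_update]
  calc 1 - piKronecker (fun _ : Fin k => X) = T 0 - T k := by
        simp [T, piKronecker_one]
    _ = ∑ i ∈ Finset.range k, (T i - T (i + 1)) := (Finset.sum_range_sub' T k).symm
    _ = ∑ i : Fin k, (T i - T (i + 1)) :=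
        (Fin.sum_univ_eq_sum_range (fun i => T i - T (i + 1)) k).symm
    _ = _ := Finset.sum_congr rfl fun i _ => (hstep i).symm

end PiKronecker

section Rank

variable {K : Type*} [Field K]

theorem rank_fromBlocks_zero_zero {m n o p : Type*} [Fintype m] [Fintype n] [Fintype o]
    [Fintype p] [DecidableEq n] [DecidableEq p] (X : Matrix m n K) (Y : Matrix o p K) :
    (fromBlocks X 0 0 Y).rank = X.rank + Y.rank := by
  have hmap : (fromBlocks X 0 0 Y).mulVecLin
      = (LinearEquiv.sumArrowLequivProdArrow m o K K).symm.toLinearMap ∘ₗ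
          (X.mulVecLin.prodMap Y.mulVecLin) ∘ₗ
            (LinearEquiv.sumArrowLequivProdArrow n p K K).toLinearMap := by
    refine LinearMap.ext fun v => funext fun i => ?_
    cases i <;> simp [fromBlocks_mulVec, LinearEquiv.sumArrowLequivProdArrow,
      Equiv.sumArrowEquivProdArrow]
  rw [rank, hmap, LinearMap.range_comp, LinearMap.range_comp, LinearEquiv.range,
    Submodule.map_top, LinearEquiv.finrank_map_eq, LinearMap.range_prodMap,
    Submodule.finrank_prod]
  rfl

theorem rank_fromBlocks_zero_transpose_zero {ι σ : Type*} [Fintype ι] [Fintype σ]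
    [DecidableEq ι] [DecidableEq σ] (M : Matrix ι σ K) :
    (fromBlocks 0 M Mᵀ 0).rank = 2 * M.rank := by
  have hswap : fromBlocks 0 M Mᵀ 0
      = (fromBlocks M 0 0 Mᵀ).submatrix (Equiv.refl _) (Equiv.sumComm ι σ) := by
    ext (i | i) (j | j) <;> rfl
  rw [hswap, rank_submatrix, rank_fromBlocks_zero_zero, rank_transpose, two_mul]

variable {ι σ : Type*} [Fintype ι] [Fintype σ] [DecidableEq ι] [DecidableEq σ]

theorem rank_fromBlocks_add_mul_add_mul (L : Matrix ι ι K) (M : Matrix ι σ K)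
    (N : Matrix σ ι K) (X : Matrix ι σ K) (Y : Matrix σ ι K) :
    (fromBlocks (L + X * N + M * Y) M N 0).rank = (fromBlocks L M N 0).rank := by
  have hU : IsUnit (fromBlocks 1 X 0 1 : Matrix (ι ⊕ σ) (ι ⊕ σ) K).det := by simp
  have hV : IsUnit (fromBlocks 1 0 Y 1 : Matrix (ι ⊕ σ) (ι ⊕ σ) K).det := by simp
  have hUTV : fromBlocks 1 X 0 1 * fromBlocks L M N 0 * fromBlocks 1 0 Y 1
      = fromBlocks (L + X * N + M * Y) M N 0 := by
    simp [fromBlocks_multiply]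
  rw [← hUTV, rank_mul_eq_left_of_isUnit_det _ _ hV, rank_mul_eq_right_of_isUnit_det _ _ hU]

theorem rank_eq_rank_add_rank_of_add_eq_one (T e₁ e₂ : Matrix ι ι K) (he : e₁ + e₂ = 1)
    (h₁₂ : e₁ * T * e₂ = 0) (h₂₁ : e₂ * T * e₁ = 0) :
    T.rank = (e₁ * T * e₁).rank + (e₂ * T * e₂).rank := by
  set E := fromRows e₁ e₂
  set E' := fromCols e₁ e₂
  have hETE' : E * T * E' = fromBlocks (e₁ * T * e₁) 0 0 (e₂ * T * e₂) := by
    simp [E, E', fromRows_mul, mul_fromCols, h₁₂, h₂₁]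
  -- `E` has the left inverse `F` and `E'` the right inverse `F'`,
  -- so `E * T * E'` has the rank of `T`.
  set F := fromCols (1 : Matrix ι ι K) (1 : Matrix ι ι K)
  set F' := fromRows (1 : Matrix ι ι K) (1 : Matrix ι ι K)
  have hFE : F * E = 1 := by simp [F, E, fromCols_mul_fromRows, he]
  have hE'F' : E' * F' = 1 := by simp [F', E', fromCols_mul_fromRows, he]
  rw [← rank_fromBlocks_zero_zero, ← hETE']
  refine le_antisymm ?_ ((rank_mul_le_left _ _).trans (rank_mul_le_right _ _))
  calc T.rank = (F * (E * T * E') * F').rank := by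
        rw [show F * (E * T * E') * F' = F * E * T * (E' * F') by simp only [Matrix.mul_assoc],
          hFE, hE'F', Matrix.one_mul, Matrix.mul_one]
    _ ≤ (E * T * E').rank := (rank_mul_le_left _ _).trans (rank_mul_le_right _ _)

theorem rank_add_rank_eq_card_of_mul_eq_zero_of_mul_add_eq_one {l : Type*} [Fintype l]
    {A : Matrix ι l K} {P : Matrix ι ι K} {B : Matrix l ι K} (hPA : P * A = 0)
    (h : A * B + P = 1) : A.rank + P.rank = Fintype.card ι := by
  rw [add_comm]
  refine le_antisymm (rank_add_rank_le_card_of_mul_eq_zero hPA) ?_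
  have hker : LinearMap.ker P.mulVecLin ≤ LinearMap.range A.mulVecLin := fun x hx => by
    refine ⟨B *ᵥ x, ?_⟩
    have hx : P *ᵥ x = 0 := hx
    simpa [add_mulVec, ← mulVec_mulVec, hx] using congrArg (· *ᵥ x) h
  have hrn := LinearMap.finrank_range_add_finrank_ker P.mulVecLin
  rw [Module.finrank_fintype_fun_eq_card] at hrn
  have := Submodule.finrank_mono hker
  rw [rank, rank]
  omega

theorem isUnit_det_of_rank_eq_card {B : Matrix ι ι K} (h : B.rank = Fintype.card ι) :
    IsUnit B.det := by
  rw [← isUnit_iff_isUnit_det, ← mulVec_surjective_iff_isUnit]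
  refine LinearMap.range_eq_top.mp
    (Submodule.eq_top_of_finrank_eq (S := LinearMap.range B.mulVecLin) ?_)
  rw [Module.finrank_fintype_fun_eq_card]
  exact h

theorem rank_fromBlocks_transpose_zero_compress (L : Matrix ι ι K) (M : Matrix ι σ K)
    {P : Matrix ι ι K} {G : Matrix σ ι K} (hPt : Pᵀ = P) (hMG : M * G = 1 - P) :
    (fromBlocks L M Mᵀ 0).rank = (fromBlocks (P * L * P) M Mᵀ 0).rank := by
  have hGM : Gᵀ * Mᵀ = 1 - P := by
    rw [← transpose_mul, hMG, transpose_sub, transpose_one, hPt]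
  have hreduce : L + -(P * L * Gᵀ) * Mᵀ + M * -(G * L) = P * L * P := by
    rw [Matrix.neg_mul, Matrix.mul_neg, Matrix.mul_assoc (P * L), hGM, ← Matrix.mul_assoc M,
      hMG]
    noncomm_ring
  rw [← rank_fromBlocks_add_mul_add_mul L M Mᵀ (-(P * L * Gᵀ)) (-(G * L)), hreduce]

theorem rank_fromBlocks_transpose_zero_of_mul_eq (Λ : Matrix ι ι K) (M : Matrix ι σ K)
    {P : Matrix ι ι K} (hPt : Pᵀ = P) (hPM : P * M = 0) (hPΛ : P * Λ = Λ)
    (hΛP : Λ * P = Λ) :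
    (fromBlocks Λ M Mᵀ 0).rank = Λ.rank + 2 * M.rank := by
  have hMP : Mᵀ * P = 0 := by rw [← hPt, ← transpose_mul, hPM, transpose_zero]
  have hQΛ : (1 - P) * Λ = 0 := by rw [Matrix.sub_mul, Matrix.one_mul, hPΛ, sub_self]
  have hΛQ : Λ * (1 - P) = 0 := by rw [Matrix.mul_sub, Matrix.mul_one, hΛP, sub_self]
  have hQM : (1 - P) * M = M := by rw [Matrix.sub_mul, Matrix.one_mul, hPM, sub_zero]
  have hMQ : Mᵀ * (1 - P) = Mᵀ := by rw [Matrix.mul_sub, Matrix.mul_one, hMP, sub_zero]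
  have hΛ₁ : fromBlocks P 0 0 0 * fromBlocks Λ M Mᵀ 0 * fromBlocks P 0 0 0
      = fromBlocks Λ 0 0 (0 : Matrix σ σ K) := by
    simp [fromBlocks_multiply, hPΛ, hΛP]
  have hΛ₂ : fromBlocks (1 - P) 0 0 1 * fromBlocks Λ M Mᵀ 0 * fromBlocks (1 - P) 0 0 1
      = fromBlocks 0 M Mᵀ (0 : Matrix σ σ K) := by
    simp [fromBlocks_multiply, hQΛ, hQM, hMQ]
  rw [rank_eq_rank_add_rank_of_add_eq_one _ (fromBlocks P 0 0 0) (fromBlocks (1 - P) 0 0 1)]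
  · rw [hΛ₁, hΛ₂, rank_fromBlocks_zero_zero, rank_zero, add_zero,
      rank_fromBlocks_zero_transpose_zero]
  · rw [fromBlocks_add]
    simp
  · simp [fromBlocks_multiply, hPM, hPΛ, hΛQ]
  · simp [fromBlocks_multiply, hMP, hQΛ]

theorem rank_fromBlocks_transpose_zero_eq (L : Matrix ι ι K) (M : Matrix ι σ K)
    {P : Matrix ι ι K} {G : Matrix σ ι K} (hPt : Pᵀ = P) (hPP : P * P = P) (hPM : P * M = 0)
    (hMG : M * G = 1 - P) :
    (fromBlocks L M Mᵀ 0).rank = (P * L * P).rank + 2 * M.rank := by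
  rw [rank_fromBlocks_transpose_zero_compress L M hPt hMG]
  exact rank_fromBlocks_transpose_zero_of_mul_eq _ M hPt hPM
    (by rw [← Matrix.mul_assoc, ← Matrix.mul_assoc, hPP]) (by rw [Matrix.mul_assoc, hPP])

theorem cast_rank_eq_trace {P : Matrix ι ι K} (hP : IsIdempotentElem P) :
    (P.rank : K) = P.trace := by
  have hP' : IsIdempotentElem (toLin' P) := by
    rw [IsIdempotentElem, Module.End.mul_eq_comp, ← toLin'_mul, hP.eq]
  rw [← trace_toLin'_eq, (LinearMap.IsIdempotentElem.isProj_range _ hP').trace]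
  rfl

end Rank

section ProjKerTranspose

variable {K m n : Type*} [Field K] [Fintype m] [Fintype n] [DecidableEq m] [DecidableEq n]

def projKerTranspose (A : Matrix m n K) : Matrix m m K :=
  1 - A * (Aᵀ * A)⁻¹ * Aᵀ

theorem transpose_projKerTranspose (A : Matrix m n K) :
    (projKerTranspose A)ᵀ = projKerTranspose A := by
  rw [projKerTranspose, transpose_sub, transpose_one, transpose_mul, transpose_mul,
    transpose_transpose, transpose_nonsing_inv, transpose_mul, transpose_transpose,
    Matrix.mul_assoc]

theorem mul_transpose_mul_nonsing_inv (A : Matrix m n K) :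
    A * (A * (Aᵀ * A)⁻¹)ᵀ = 1 - projKerTranspose A := by
  rw [projKerTranspose, sub_sub_cancel, transpose_mul, transpose_nonsing_inv, transpose_mul,
    transpose_transpose, Matrix.mul_assoc]

variable {A : Matrix m n K} (hA : IsUnit (Aᵀ * A).det)
include hA

theorem projKerTranspose_mul_self : projKerTranspose A * A = 0 := by
  rw [projKerTranspose, Matrix.sub_mul, Matrix.one_mul, Matrix.mul_assoc _ Aᵀ,
    Matrix.mul_assoc A, nonsing_inv_mul _ hA, Matrix.mul_one, sub_self]

theorem projKerTranspose_mul_projKerTranspose :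
    projKerTranspose A * projKerTranspose A = projKerTranspose A := by
  conv_lhs => enter [2]; rw [projKerTranspose]
  rw [Matrix.mul_sub, Matrix.mul_one, ← Matrix.mul_assoc, ← Matrix.mul_assoc,
    projKerTranspose_mul_self hA, Matrix.zero_mul, Matrix.zero_mul, sub_zero]

theorem trace_projKerTranspose :
    (projKerTranspose A).trace = Fintype.card m - Fintype.card n := by
  rw [projKerTranspose, trace_sub, trace_one, trace_mul_comm, ← Matrix.mul_assoc,
    mul_nonsing_inv _ hA, trace_one]

end ProjKerTranspose

section Blocks

variable {n p q k : ℕ}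

def mBlockFactor (B : Matrix (Fin n) (Fin q) ℝ) (A : Matrix (Fin n) (Fin p) ℝ) (i j : Fin k) :
    Matrix (Fin n) (Fin (mCol q p n i j)) ℝ :=
  if h₁ : j < i then B.submatrix id (finCongr (by simp [mCol, h₁]))
  else if h₂ : j = i then A.submatrix id (finCongr (by simp [mCol, h₂]))
  else (1 : Matrix (Fin n) (Fin n) ℝ).submatrix id (finCongr (by simp [mCol, h₁, h₂]))

theorem mBlock_eq_piKronecker (B : Matrix (Fin n) (Fin q) ℝ) (A : Matrix (Fin n) (Fin p) ℝ)
    (i : Fin k) : mBlock B A i = piKronecker (mBlockFactor B A i) := by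
  ext r c
  simp only [mBlock, piKronecker, mBlockFactor, of_apply]
  refine Finset.prod_congr rfl fun j _ => ?_
  split_ifs <;> rfl

theorem mBlockFactor_mul_transpose (B B' : Matrix (Fin n) (Fin q) ℝ)
    (A A' : Matrix (Fin n) (Fin p) ℝ) (i j : Fin k) :
    mBlockFactor B A i j * (mBlockFactor B' A' i j)ᵀ
      = if j < i then B * B'ᵀ else if j = i then A * A'ᵀ else 1 := by
  unfold mBlockFactor
  split_ifs <;> simp

theorem mul_mBlockFactor_self {m : Type*} (R : Matrix m (Fin n) ℝ)
    (B : Matrix (Fin n) (Fin q) ℝ) (A : Matrix (Fin n) (Fin p) ℝ) (hRA : R * A = 0)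
    (i : Fin k) :
    R * mBlockFactor B A i i = 0 := by
  ext r c
  simp only [mBlockFactor, lt_irrefl, dite_false, dite_true]
  exact congrFun (congrFun hRA r) _

theorem mFull_mul_transpose_mFull (B B' : Matrix (Fin n) (Fin q) ℝ)
    (A A' : Matrix (Fin n) (Fin p) ℝ) :
    mFull k B A * (mFull k B' A')ᵀ = ∑ i, mBlock B A i * (mBlock B' A' i)ᵀ := by
  ext r s
  simp only [mul_apply, sum_apply, transpose_apply, mFull, of_apply, Fintype.sum_sigma]

theorem kronPow_eq_piKronecker (X : Matrix (Fin n) (Fin n) ℝ) :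
    kronPow k X = piKronecker fun _ => X :=
  rfl

theorem transpose_kronPow (X : Matrix (Fin n) (Fin n) ℝ) : (kronPow k X)ᵀ = kronPow k Xᵀ :=
  rfl

theorem kronPow_mul_kronPow (X Y : Matrix (Fin n) (Fin n) ℝ) :
    kronPow k X * kronPow k Y = kronPow k (X * Y) :=
  piKronecker_mul _ _

theorem trace_kronPow (X : Matrix (Fin n) (Fin n) ℝ) : (kronPow k X).trace = X.trace ^ k := by
  rw [kronPow_eq_piKronecker, trace_piKronecker, Finset.prod_const, Finset.card_univ,
    Fintype.card_fin]

theorem kronPow_mul_mFull_eq_zero (R : Matrix (Fin n) (Fin n) ℝ) (B : Matrix (Fin n) (Fin q) ℝ)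
    (A : Matrix (Fin n) (Fin p) ℝ) (hRA : R * A = 0) : kronPow k R * mFull k B A = 0 := by
  ext r ⟨i, c⟩
  change (kronPow k R * mBlock B A i) r c = 0
  rw [kronPow_eq_piKronecker, mBlock_eq_piKronecker, piKronecker_mul,
    piKronecker_eq_zero i (mul_mBlockFactor_self R B A hRA i), zero_apply]

theorem mFull_one_mul_transpose_mFull (R : Matrix (Fin n) (Fin n) ℝ)
    (A G : Matrix (Fin n) (Fin p) ℝ) (hR : Rᵀ = R) (hAG : A * Gᵀ = 1 - R) :
    mFull k (1 : Matrix (Fin n) (Fin n) ℝ) A * (mFull k R G)ᵀ = 1 - kronPow k R := by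
  rw [mFull_mul_transpose_mFull, kronPow_eq_piKronecker, one_sub_piKronecker_const]
  refine Finset.sum_congr rfl fun i _ => ?_
  rw [mBlock_eq_piKronecker, mBlock_eq_piKronecker, transpose_piKronecker, piKronecker_mul]
  congr 1
  funext j
  rw [mBlockFactor_mul_transpose, one_mul, hR, hAG]

end Blocks

end Matrix

theorem stmt12_general {n1 n2 : ℕ} (hn : n2 < n1) (A12 : Matrix (Fin n1) (Fin n2) ℝ)
    (hA : A12.rank = n2)
    (R : Matrix (Fin n1) (Fin n1) ℝ)
    (hR : R = 1 - A12 * (A12ᵀ * A12)⁻¹ * A12ᵀ)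
    (k : ℕ)
    (L : Matrix (Fin k → Fin n1) (Fin k → Fin n1) ℝ) :
    (Matrix.fromBlocks L (mFull k (1 : Matrix (Fin n1) (Fin n1) ℝ) A12)
        (mFull k (1 : Matrix (Fin n1) (Fin n1) ℝ) A12)ᵀ 0).rank
      = 2 * (n1 ^ k - (n1 - n2) ^ k) + (kronPow k R * L * kronPow k R).rank := by
  obtain rfl : R = projKerTranspose A12 := hR
  have hdet : IsUnit (A12ᵀ * A12).det := isUnit_det_of_rank_eq_card <| by
    rw [rank_transpose_mul_self, hA, Fintype.card_fin]
  set P := kronPow k (projKerTranspose A12) with hP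
  set M := mFull k (1 : Matrix (Fin n1) (Fin n1) ℝ) A12
  have hPt : Pᵀ = P := by rw [hP, transpose_kronPow, transpose_projKerTranspose]
  have hPP : P * P = P := by
    rw [hP, kronPow_mul_kronPow, projKerTranspose_mul_projKerTranspose hdet]
  have hPM : P * M = 0 := kronPow_mul_mFull_eq_zero _ _ _ (projKerTranspose_mul_self hdet)
  have hMG := mFull_one_mul_transpose_mFull (k := k) _ A12 _ (transpose_projKerTranspose A12)
    (mul_transpose_mul_nonsing_inv A12)
  have hrankP : P.rank = (n1 - n2) ^ k := by
    have h := cast_rank_eq_trace hPP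
    rw [hP, trace_kronPow, trace_projKerTranspose hdet, Fintype.card_fin, Fintype.card_fin,
      ← Nat.cast_sub hn.le, ← Nat.cast_pow] at h
    exact_mod_cast h
  have hrankM : M.rank + P.rank = n1 ^ k := by
    simpa using rank_add_rank_eq_card_of_mul_eq_zero_of_mul_add_eq_one hPM
      (by rw [hMG, sub_add_cancel])
  rw [rank_fromBlocks_transpose_zero_eq L M hPt hPP hPM hMG]
  omega

/-- Let `A12 ∈ ℝ^{n1×n2}` have full column rank with `n2 < n1`,
`R = I - A12 (A12ᵀ A12)⁻¹ A12ᵀ`, `k` a positive integer, `L ∈ ℝ^{n1^k × n1^k}`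
arbitrary, and `M = M_k(A12)`.  Then
`rank [[L, M], [Mᵀ, 0]] = 2 (n1^k - (n1-n2)^k) + rank (R^{⊗k} L R^{⊗k})`. -/
theorem stmt12 {n1 n2 : ℕ} (hn : n2 < n1) (A12 : Matrix (Fin n1) (Fin n2) ℝ)
    (hA : A12.rank = n2)
    (R : Matrix (Fin n1) (Fin n1) ℝ)
    (hR : R = 1 - A12 * (A12ᵀ * A12)⁻¹ * A12ᵀ)
    (k : ℕ) (hk : 0 < k)
    (L : Matrix (Fin k → Fin n1) (Fin k → Fin n1) ℝ) :
    (Matrix.fromBlocks L (mFull k (1 : Matrix (Fin n1) (Fin n1) ℝ) A12)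
        (mFull k (1 : Matrix (Fin n1) (Fin n1) ℝ) A12)ᵀ 0).rank
      = 2 * (n1 ^ k - (n1 - n2) ^ k) + (kronPow k R * L * kronPow k R).rank :=
  stmt12_general hn A12 hA R hR k L
end
end

section
/- Let E11 ∈ ℝ^{n1×n1} be invertible, A12 ∈ ℝ^{n1×n2} have full column rank with A12ᵀE11⁻¹A12 invertible, Π = I_{n1} − A12(A12ᵀE11⁻¹A12)⁻¹A12ᵀE11⁻¹, and R = I_{n1} − A12(A12ᵀA12)⁻¹A12ᵀ. Let Θ_ℓ, Θ_r ∈ ℝ^{n1×(n1−n2)} satisfy Π = Θ_ℓΘ_rᵀ and Θ_ℓᵀΘ_r = I_{n1−n2}, and let Q1 ∈ ℝ^{n1×(n1−n2)} have orthonormal columns (Q1ᵀQ1 = I_{n1−n2}) with Q1 Q1ᵀ = R. Then the (n1−n2)×(n1−n2) matrix Θ_ℓᵀ Q1 is invertible. -/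
/-!
Since `R A12 = 0` and `Q1ᵀ = Q1ᵀ Q1 Q1ᵀ = Q1ᵀ R`, the columns of `Q1` are orthogonal to those of
`A12`; as `Π` differs from the identity by a matrix of the form `A12 M`, this gives `Q1ᵀ Π Q1 =
Q1ᵀ Q1 = 1`. Inserting `Π = Θℓ Θrᵀ` exhibits `Θrᵀ Q1` as a right inverse of the square matrix
`Q1ᵀ Θℓ = (Θℓᵀ Q1)ᵀ`.
-/

open Matrix

namespace Matrix

theorem isUnit_of_rank_eq_card_s13 {n K : Type*} [Fintype n] [DecidableEq n] [Field K]
    {A : Matrix n n K} (h : A.rank = Fintype.card n) : IsUnit A := by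
  have hrange : LinearMap.range A.mulVecLin = ⊤ :=
    Submodule.eq_top_of_finrank_eq (by simpa [rank] using h)
  rw [← mulVec_surjective_iff_isUnit]
  exact LinearMap.range_eq_top.mp hrange

theorem isUnit_transpose_mul_self_of_rank_eq {m n K : Type*} [Fintype m] [Fintype n]
    [DecidableEq n] [Field K] [LinearOrder K] [IsStrictOrderedRing K]
    {A : Matrix m n K} (h : A.rank = Fintype.card n) : IsUnit (Aᵀ * A) :=
  isUnit_of_rank_eq_card_s13 (by rw [rank_transpose_mul_self, h])

theorem one_sub_mul_inv_transpose_mul_self_mul_eq_zero {m n R : Type*} [Fintype m] [Fintype n]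
    [DecidableEq m] [DecidableEq n] [CommRing R] {A : Matrix m n R} (hA : IsUnit (Aᵀ * A)) :
    (1 - A * (Aᵀ * A)⁻¹ * Aᵀ) * A = 0 := by
  rw [Matrix.sub_mul, Matrix.one_mul, Matrix.mul_assoc, Matrix.mul_assoc,
    nonsing_inv_mul _ ((isUnit_iff_isUnit_det _).mp hA), Matrix.mul_one, sub_self]

theorem transpose_mul_eq_zero_of_mul_transpose_mul_eq_zero {m n k R : Type*} [Fintype m]
    [Fintype k] [DecidableEq k] [Semiring R] {Q : Matrix m k R} {A : Matrix m n R}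
    (hQ : Qᵀ * Q = 1) (hQA : Q * Qᵀ * A = 0) : Qᵀ * A = 0 := by
  rw [← Matrix.one_mul (Qᵀ * A), ← hQ, Matrix.mul_assoc, ← Matrix.mul_assoc Q, hQA,
    Matrix.mul_zero]

end Matrix

theorem stmt13_general {n1 n2 : ℕ} (E11 : Matrix (Fin n1) (Fin n1) ℝ)
    (A12 : Matrix (Fin n1) (Fin n2) ℝ) (hA : A12.rank = n2)
    (Proj : Matrix (Fin n1) (Fin n1) ℝ)
    (hProj : Proj = 1 - A12 * (A12ᵀ * E11⁻¹ * A12)⁻¹ * A12ᵀ * E11⁻¹)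
    (R : Matrix (Fin n1) (Fin n1) ℝ)
    (hR : R = 1 - A12 * (A12ᵀ * A12)⁻¹ * A12ᵀ)
    (Θl Θr : Matrix (Fin n1) (Fin (n1 - n2)) ℝ)
    (hPfac : Proj = Θl * Θrᵀ)
    (Q1 : Matrix (Fin n1) (Fin (n1 - n2)) ℝ)
    (hQorth : Q1ᵀ * Q1 = 1) (hQR : Q1 * Q1ᵀ = R) :
    IsUnit (Θlᵀ * Q1) := by
  have hG : IsUnit (A12ᵀ * A12) := isUnit_transpose_mul_self_of_rank_eq (by simpa using hA)
  have hQA : Q1ᵀ * A12 = 0 := transpose_mul_eq_zero_of_mul_transpose_mul_eq_zero hQorth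
    (by rw [hQR, hR]; exact one_sub_mul_inv_transpose_mul_self_mul_eq_zero hG)
  have hQPQ : Q1ᵀ * Proj * Q1 = 1 := by
    simp only [hProj, Matrix.mul_sub, Matrix.mul_one, ← Matrix.mul_assoc, hQorth,
      hQA, Matrix.zero_mul, sub_zero]
  have hRightInv : Q1ᵀ * Θl * (Θrᵀ * Q1) = 1 := by
    rw [← hQPQ, hPfac, Matrix.mul_assoc, Matrix.mul_assoc, Matrix.mul_assoc]
  rw [← isUnit_transpose, transpose_mul, transpose_transpose]
  exact IsUnit.of_mul_eq_one _ hRightInv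

/-- Let `Π = I - A12 (A12ᵀ E11⁻¹ A12)⁻¹ A12ᵀ E11⁻¹`,
`R = I - A12 (A12ᵀ A12)⁻¹ A12ᵀ`, let `Θℓ, Θr` satisfy `Π = Θℓ Θrᵀ`, `Θℓᵀ Θr = I`,
and let `Q1` have orthonormal columns with `Q1 Q1ᵀ = R`.  Then `Θℓᵀ Q1` is invertible. -/
theorem stmt13 {n1 n2 : ℕ} (E11 : Matrix (Fin n1) (Fin n1) ℝ) (hE : IsUnit E11)
    (A12 : Matrix (Fin n1) (Fin n2) ℝ) (hA : A12.rank = n2)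
    (hS : IsUnit (A12ᵀ * E11⁻¹ * A12))
    (Proj : Matrix (Fin n1) (Fin n1) ℝ)
    (hProj : Proj = 1 - A12 * (A12ᵀ * E11⁻¹ * A12)⁻¹ * A12ᵀ * E11⁻¹)
    (R : Matrix (Fin n1) (Fin n1) ℝ)
    (hR : R = 1 - A12 * (A12ᵀ * A12)⁻¹ * A12ᵀ)
    (Θl Θr : Matrix (Fin n1) (Fin (n1 - n2)) ℝ)
    (hPfac : Proj = Θl * Θrᵀ) (hΘ : Θlᵀ * Θr = 1)
    (Q1 : Matrix (Fin n1) (Fin (n1 - n2)) ℝ)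
    (hQorth : Q1ᵀ * Q1 = 1) (hQR : Q1 * Q1ᵀ = R) :
    IsUnit (Θlᵀ * Q1) :=
  stmt13_general E11 A12 hA Proj hProj R hR Θl Θr hPfac Q1 hQorth hQR
end
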